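/- For smooth positive functions u_1,...,u_n with u_0 = 1 - ∑ u_i > 0, the pointwise identity ∑_{i=1}^n u_i u_0 |∇ log(u_i/u_0)|^2 = 4 u_0 ∑_{i=1}^n |∇ u_i^{1/2}|^2 + |∇ u_0|^2 + 4 |∇ u_0^{1/2}|^2 holds. -/

import Mathlib

open Real Filter
open scoped RealInnerProductSpace

theorem stmt6 (n d : ℕ) (hn : 1 ≤ n)
    (Ω : Set (EuclideanSpace ℝ (Fin d))) (hΩ : IsOpen Ω)
    (u : Fin n → EuclideanSpace ℝ (Fin d) → ℝ)
    (u0 : EuclideanSpace ℝ (Fin d) → ℝ)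
    (hu0 : ∀ y, u0 y = 1 - ∑ i, u i y)
    (x : EuclideanSpace ℝ (Fin d)) (hx : x ∈ Ω)
    (hdiff : ∀ i, DifferentiableAt ℝ (u i) x)
    (hpos : ∀ i, 0 < u i x) (hpos0 : 0 < u0 x) :
    ∑ i, u i x * u0 x * ‖fderiv ℝ (fun y => Real.log (u i y / u0 y)) x‖ ^ 2
      = 4 * u0 x * ∑ i, ‖fderiv ℝ (fun y => Real.sqrt (u i y)) x‖ ^ 2
        + ‖fderiv ℝ u0 x‖ ^ 2
        + 4 * ‖fderiv ℝ (fun y => Real.sqrt (u0 y)) x‖ ^ 2 := by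
  classical
  have hu0fun : u0 = fun y => 1 - ∑ i, u i y := funext hu0
  have hdiffsum : DifferentiableAt ℝ (fun y => ∑ i, u i y) x :=
    DifferentiableAt.fun_sum fun i _ => hdiff i
  have hdiff0 : DifferentiableAt ℝ u0 x := by
    rw [hu0fun]; exact (differentiableAt_const 1).sub hdiffsum
  have fd0 : fderiv ℝ u0 x = - ∑ i, fderiv ℝ (u i) x := by
    conv_lhs => rw [hu0fun]
    rw [fderiv_fun_sub (differentiableAt_const 1) hdiffsum, fderiv_fun_const,
      fderiv_fun_sum fun i _ => hdiff i]
    simp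
  -- Riesz representatives
  set T := (InnerProductSpace.toDual ℝ (EuclideanSpace ℝ (Fin d))).symm with hT
  set g : Fin n → EuclideanSpace ℝ (Fin d) := fun i => T (fderiv ℝ (u i) x) with hg
  set g0 : EuclideanSpace ℝ (Fin d) := T (fderiv ℝ u0 x) with hg0def
  have hgi : ∀ i, T (fderiv ℝ (u i) x) = g i := fun i => rfl
  have hg0' : T (fderiv ℝ u0 x) = g0 := rfl
  have hg0 : g0 = -∑ i, g i := by
    rw [hg0def, fd0, map_neg, map_sum]
  -- derivative of log quotient
  have hlog : ∀ i, fderiv ℝ (fun y => Real.log (u i y / u0 y)) x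
      = (u i x)⁻¹ • fderiv ℝ (u i) x - (u0 x)⁻¹ • fderiv ℝ u0 x := by
    intro i
    have h1 : ∀ᶠ y in nhds x, 0 < u i y :=
      (hdiff i).continuousAt.eventually (eventually_gt_nhds (hpos i))
    have h0 : ∀ᶠ y in nhds x, 0 < u0 y :=
      hdiff0.continuousAt.eventually (eventually_gt_nhds hpos0)
    have hev : (fun y => Real.log (u i y / u0 y)) =ᶠ[nhds x]
        fun y => Real.log (u i y) - Real.log (u0 y) := by
      filter_upwards [h1, h0] with y hy1 hy0
      exact Real.log_div hy1.ne' hy0.ne'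
    rw [hev.fderiv_eq]
    exact ((((hdiff i).hasFDerivAt.log (hpos i).ne').sub
      (hdiff0.hasFDerivAt.log hpos0.ne')).fderiv)
  have hsqrt : ∀ i, fderiv ℝ (fun y => Real.sqrt (u i y)) x
      = (1 / (2 * Real.sqrt (u i x))) • fderiv ℝ (u i) x := fun i =>
    ((hdiff i).hasFDerivAt.sqrt (hpos i).ne').fderiv
  have hsqrt0 : fderiv ℝ (fun y => Real.sqrt (u0 y)) x
      = (1 / (2 * Real.sqrt (u0 x))) • fderiv ℝ u0 x :=
    (hdiff0.hasFDerivAt.sqrt hpos0.ne').fderiv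
  -- norms via Riesz
  have hnorm : ∀ f : EuclideanSpace ℝ (Fin d) →L[ℝ] ℝ, ‖f‖ = ‖T f‖ :=
    fun f => (T.norm_map f).symm
  -- LHS rewrite
  have hL : ∀ i, u i x * u0 x * ‖fderiv ℝ (fun y => Real.log (u i y / u0 y)) x‖ ^ 2
      = u0 x * ((u i x)⁻¹ * ‖g i‖ ^ 2) - 2 * ⟪g i, g0⟫ + u i x * ((u0 x)⁻¹ * ‖g0‖ ^ 2) := by
    intro i
    rw [hlog i, hnorm, map_sub, map_smul, map_smul]
    rw [hgi i, hg0', @norm_sub_sq_real, real_inner_smul_left, real_inner_smul_right,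
      norm_smul, norm_smul, Real.norm_eq_abs, Real.norm_eq_abs,
      abs_of_pos (inv_pos.mpr (hpos i)), abs_of_pos (inv_pos.mpr hpos0)]
    have h1 := (hpos i).ne'
    have h0 := hpos0.ne'
    field_simp
  have hcross : ∑ i, ⟪g i, g0⟫ = -‖g0‖ ^ 2 := by
    have hsum : ∑ i, g i = -g0 := by rw [hg0, neg_neg]
    rw [← sum_inner, hsum, inner_neg_left, real_inner_self_eq_norm_sq]
  have hRi : ∀ i, ‖fderiv ℝ (fun y => Real.sqrt (u i y)) x‖ ^ 2
      = (4 * u i x)⁻¹ * ‖g i‖ ^ 2 := by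
    intro i
    rw [hsqrt i, hnorm, map_smul, hgi i, norm_smul, mul_pow, Real.norm_eq_abs, sq_abs,
      div_pow, one_pow, mul_pow, Real.sq_sqrt (hpos i).le]
    ring
  have hR0 : ‖fderiv ℝ (fun y => Real.sqrt (u0 y)) x‖ ^ 2
      = (4 * u0 x)⁻¹ * ‖g0‖ ^ 2 := by
    rw [hsqrt0, hnorm, map_smul, hg0', norm_smul, mul_pow, Real.norm_eq_abs, sq_abs,
      div_pow, one_pow, mul_pow, Real.sq_sqrt hpos0.le]
    ring
  have hDg0 : ‖fderiv ℝ u0 x‖ ^ 2 = ‖g0‖ ^ 2 := by rw [hnorm, hg0']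
  have hsumu : ∑ i, u i x = 1 - u0 x := by
    have := hu0 x; linarith
  calc ∑ i, u i x * u0 x * ‖fderiv ℝ (fun y => Real.log (u i y / u0 y)) x‖ ^ 2
      = ∑ i, (u0 x * ((u i x)⁻¹ * ‖g i‖ ^ 2) - 2 * ⟪g i, g0⟫
          + u i x * ((u0 x)⁻¹ * ‖g0‖ ^ 2)) := Finset.sum_congr rfl fun i _ => hL i
    _ = u0 x * ∑ i, (u i x)⁻¹ * ‖g i‖ ^ 2 - 2 * ∑ i, ⟪g i, g0⟫
          + (∑ i, u i x) * ((u0 x)⁻¹ * ‖g0‖ ^ 2) := by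
        rw [Finset.sum_add_distrib, Finset.sum_sub_distrib, ← Finset.mul_sum,
          ← Finset.mul_sum, ← Finset.sum_mul]
    _ = u0 x * ∑ i, (u i x)⁻¹ * ‖g i‖ ^ 2 + 2 * ‖g0‖ ^ 2
          + (1 - u0 x) * ((u0 x)⁻¹ * ‖g0‖ ^ 2) := by
        rw [hcross, hsumu]; ring
    _ = 4 * u0 x * ∑ i, ‖fderiv ℝ (fun y => Real.sqrt (u i y)) x‖ ^ 2
        + ‖fderiv ℝ u0 x‖ ^ 2
        + 4 * ‖fderiv ℝ (fun y => Real.sqrt (u0 y)) x‖ ^ 2 := by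
        rw [hDg0, hR0]
        have : ∑ i, ‖fderiv ℝ (fun y => Real.sqrt (u i y)) x‖ ^ 2
            = ∑ i, (4 * u i x)⁻¹ * ‖g i‖ ^ 2 := Finset.sum_congr rfl fun i _ => hRi i
        rw [this]
        have h4 : 4 * u0 x * ∑ i, (4 * u i x)⁻¹ * ‖g i‖ ^ 2
            = u0 x * ∑ i, (u i x)⁻¹ * ‖g i‖ ^ 2 := by
          rw [Finset.mul_sum, Finset.mul_sum]
          refine Finset.sum_congr rfl fun i _ => ?_
          have := (hpos i).ne'
          field_simp
        rw [h4]
        have hu0ne := hpos0.ne'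
        field_simp
        ring
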